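/- In the setting of the bialgebra structure on B = Coend(F) for a tensor functor (F, Id_I, F₂) from a strict tensor category C to Vect_k^f: the multiplication maps m_{X,Y} := i_{X⊗Y} ∘ conj(F₂) : Hom_k(F(X) ⊗ F(Y), F(X) ⊗ F(Y)) → B, where conj(F₂)(W) = F₂ ∘ W ∘ F₂^{-1}, are coalgebra maps (from the comatrix coalgebra on Hom_k(F(X)⊗F(Y), F(X)⊗F(Y)) to B), and consequently the multiplication m : B ⊗ B → B and unit η : k → B are coalgebra morphisms. -/

import Mathlib

/-
Conjugation by an invertible linear map `P : M → N` and the tensor product of endomorphisms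
`End M ⊗ End N → End (M ⊗ N)` are morphisms of comatrix coalgebras. Both are checked in adapted
bases (the transported basis, resp. the product basis), which is legitimate because the comatrix
comultiplication does not depend on the basis: `Δ S` is a fixed expression in `S` and two copies
of the canonical element `∑ eᵢ* ⊗ eᵢ` of `M* ⊗ M`, the preimage of `id`.
Maps out of `B ⊗ B` are determined on the generators `i_X S ⊗ i_Y T`, which `m` sends to
`m_{X,Y} (S ⊗ T)`; so multiplicativity of `Δ` and `ε` reduces to the two facts above. The unit
`i_I id` is grouplike because `F I ≅ k` is one-dimensional.
-/

open CategoryTheory TensorProduct MonoidalCategory Functor.LaxMonoidal Functor.OplaxMonoidal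

noncomputable section
universe w₁ w₂ u
variable (k : Type) [Field k]

def smulRightL {M : Type} [AddCommGroup M] [Module k M] (x : M) :
    (M →ₗ[k] k) →ₗ[k] (M →ₗ[k] M) where
  toFun f := f.smulRight x
  map_add' f g := by ext y; simp [add_smul]
  map_smul' c f := by ext y; simp [smul_smul]

/-- The comatrix comultiplication on `Hom_k(M,M)`; the counit is the trace. -/
def comatrixComul (M : Type) [AddCommGroup M] [Module k M] [Module.Finite k M] :
    (M →ₗ[k] M) →ₗ[k] ((M →ₗ[k] M) ⊗[k] (M →ₗ[k] M)) :=
  let b := Module.Free.chooseBasis k M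
  ∑ i, ∑ l,
    ((TensorProduct.mk k (M →ₗ[k] M) (M →ₗ[k] M)).flip ((b.coord l).smulRight (b i))) ∘ₗ
      (smulRightL k (b l)) ∘ₗ (LinearMap.llcomp k M M k (b.coord i))

variable (C : Type u) [SmallCategory C] [MonoidalCategory C] [Preadditive C]
  [CategoryTheory.Linear k C] [Abelian C]
variable (F : C ⥤ ModuleCat k) [F.Monoidal] [F.Additive] [F.Linear k]

/-- Dinaturality of a family of maps `Hom_k(F X, F X) → U`. -/
def DinatC (U : Type w₁) [AddCommGroup U] [Module k U]
    (i : ∀ X : C, (F.obj X →ₗ[k] F.obj X) →ₗ[k] U) : Prop :=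
  ∀ (X Y : C) (f : Y ⟶ X) (S : F.obj X →ₗ[k] F.obj Y),
    i X (((F.map f).hom : F.obj Y →ₗ[k] F.obj X) ∘ₗ S)
      = i Y (S ∘ₗ ((F.map f).hom : F.obj Y →ₗ[k] F.obj X))

/-- `(U, i)` is a realization of `Coend(F)`. -/
def IsCoendRealization (U : Type w₁) [AddCommGroup U] [Module k U]
    (i : ∀ X : C, (F.obj X →ₗ[k] F.obj X) →ₗ[k] U) : Prop :=
  DinatC k C F U i ∧
  ∀ (V : Type w₂) [AddCommGroup V] [Module k V]
    (j : ∀ X : C, (F.obj X →ₗ[k] F.obj X) →ₗ[k] V), DinatC k C F V j →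
    ∃! φ : U →ₗ[k] V, ∀ X : C, φ ∘ₗ i X = j X

/-- Conjugation `W ↦ P ∘ W ∘ Q` as a linear map on endomorphisms. -/
def conjL {M N : Type} [AddCommGroup M] [Module k M] [AddCommGroup N] [Module k N]
    (P : M →ₗ[k] N) (Q : N →ₗ[k] M) : (M →ₗ[k] M) →ₗ[k] (N →ₗ[k] N) where
  toFun S := P ∘ₗ S ∘ₗ Q
  map_add' S T := by ext y; simp
  map_smul' c S := by ext y; simp

open Module

section Comatrix

variable {k} {M N : Type} [AddCommGroup M] [Module k M] [AddCommGroup N] [Module k N]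

def comatrixComulOfBasis {ι : Type*} [Fintype ι] (b : Basis ι k M) :
    (M →ₗ[k] M) →ₗ[k] (M →ₗ[k] M) ⊗[k] (M →ₗ[k] M) :=
  ∑ i, ∑ l,
    ((TensorProduct.mk k (M →ₗ[k] M) (M →ₗ[k] M)).flip ((b.coord l).smulRight (b i))) ∘ₗ
      (smulRightL k (b l)) ∘ₗ (LinearMap.llcomp k M M k (b.coord i))

lemma comatrixComulOfBasis_apply {ι : Type*} [Fintype ι] (b : Basis ι k M) (S : M →ₗ[k] M) :
    comatrixComulOfBasis b S = ∑ i, ∑ l,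
      (b.coord i ∘ₗ S).smulRight (b l) ⊗ₜ[k] (b.coord l).smulRight (b i) := by
  simp only [comatrixComulOfBasis, LinearMap.sum_apply, LinearMap.comp_apply]
  rfl

def smulRightSwap (S : M →ₗ[k] M) :
    (Dual k M ⊗[k] M) ⊗[k] (Dual k M ⊗[k] M) →ₗ[k] (M →ₗ[k] M) ⊗[k] (M →ₗ[k] M) :=
  TensorProduct.map (dualTensorHom k M M ∘ₗ TensorProduct.map S.dualMap LinearMap.id)
      (dualTensorHom k M M) ∘ₗ
    (tensorTensorTensorComm k (Dual k M) (Dual k M) M M).toLinearMap ∘ₗ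
    TensorProduct.map LinearMap.id (TensorProduct.comm k M M).toLinearMap ∘ₗ
    (tensorTensorTensorComm k (Dual k M) M (Dual k M) M).toLinearMap

lemma smulRightSwap_tmul (S : M →ₗ[k] M) (f g : Dual k M) (x y : M) :
    smulRightSwap S ((f ⊗ₜ x) ⊗ₜ (g ⊗ₜ y)) = (f ∘ₗ S).smulRight y ⊗ₜ g.smulRight x := by
  simp only [smulRightSwap, LinearMap.coe_comp, LinearEquiv.coe_coe, Function.comp_apply,
    tensorTensorTensorComm_tmul, TensorProduct.map_tmul, LinearMap.id_coe, id_eq,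
    TensorProduct.comm_tmul]
  rfl

lemma comatrixComulOfBasis_eq_smulRightSwap {ι : Type*} [Fintype ι] (b : Basis ι k M)
    (S : M →ₗ[k] M) :
    comatrixComulOfBasis b S
      = smulRightSwap S ((∑ i, b.coord i ⊗ₜ b i) ⊗ₜ (∑ i, b.coord i ⊗ₜ b i)) := by
  simp only [comatrixComulOfBasis_apply, TensorProduct.sum_tmul, TensorProduct.tmul_sum,
    map_sum, smulRightSwap_tmul]
  exact Finset.sum_comm

lemma Module.Basis.dualTensorHom_sum_coord_tmul {ι : Type*} [Fintype ι] (b : Basis ι k M) :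
    dualTensorHom k M M (∑ i, b.coord i ⊗ₜ b i) = LinearMap.id := by
  ext x
  simp [dualTensorHom_apply, b.sum_repr x]

lemma Module.Basis.sum_coord_tmul_eq {ι κ : Type*} [Fintype ι] [Fintype κ]
    (b : Basis ι k M) (c : Basis κ k M) :
    ∑ i, b.coord i ⊗ₜ[k] b i = ∑ j, c.coord j ⊗ₜ[k] c j := by
  classical
  apply (dualTensorHomEquivOfBasis b).injective
  simp only [dualTensorHomEquivOfBasis_apply, b.dualTensorHom_sum_coord_tmul,
    c.dualTensorHom_sum_coord_tmul]

lemma comatrixComul_eq_comatrixComulOfBasis [Module.Finite k M] {ι : Type*} [Fintype ι]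
    (b : Basis ι k M) : comatrixComul k M = comatrixComulOfBasis b := by
  change comatrixComulOfBasis (Free.chooseBasis k M) = _
  ext S : 1
  rw [comatrixComulOfBasis_eq_smulRightSwap,
    comatrixComulOfBasis_eq_smulRightSwap, (Free.chooseBasis k M).sum_coord_tmul_eq b]

lemma comatrixComul_comp_conjL [Module.Finite k M] [Module.Finite k N]
    (P : M →ₗ[k] N) (Q : N →ₗ[k] M) (hPQ : P ∘ₗ Q = LinearMap.id) (hQP : Q ∘ₗ P = LinearMap.id) :
    comatrixComul k N ∘ₗ conjL k P Q
      = TensorProduct.map (conjL k P Q) (conjL k P Q) ∘ₗ comatrixComul k M := by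
  let b := Free.chooseBasis k M
  let e : M ≃ₗ[k] N := .ofLinearMap P Q hPQ hQP
  rw [comatrixComul_eq_comatrixComulOfBasis b, comatrixComul_eq_comatrixComulOfBasis (b.map e)]
  ext S : 1
  simp only [LinearMap.comp_apply, comatrixComulOfBasis_apply, map_sum, TensorProduct.map_tmul]
  have hQP_apply (y : M) : Q (P y) = y := LinearMap.congr_fun hQP y
  congr! 3 with i - l - <;> ext x <;> simp [conjL, e, hQP_apply]

lemma Module.Basis.tensorProduct_coord_comp_map_smulRight {ι κ : Type*} (b : Basis ι k M)
    (c : Basis κ k N) (S : M →ₗ[k] M) (T : N →ₗ[k] N) (i l : ι) (j m : κ) :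
    ((b.tensorProduct c).coord (i, j) ∘ₗ TensorProduct.map S T).smulRight
        (b.tensorProduct c (l, m))
      = TensorProduct.map ((b.coord i ∘ₗ S).smulRight (b l))
          ((c.coord j ∘ₗ T).smulRight (c m)) := by
  ext x y
  simp [mul_smul, TensorProduct.smul_tmul', TensorProduct.tmul_smul]

lemma comatrixComul_comp_homTensorHomMap [Module.Finite k M] [Module.Finite k N] :
    comatrixComul k (M ⊗[k] N) ∘ₗ homTensorHomMap (RingHom.id k) M N M N
      = TensorProduct.map (homTensorHomMap (RingHom.id k) M N M N)
          (homTensorHomMap (RingHom.id k) M N M N) ∘ₗ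
        (tensorTensorTensorComm k _ _ _ _).toLinearMap ∘ₗ
        TensorProduct.map (comatrixComul k M) (comatrixComul k N) := by
  let b := Free.chooseBasis k M
  let c := Free.chooseBasis k N
  have coord_smulRight (i l j m) : ((b.tensorProduct c).coord (i, j)).smulRight
      (b.tensorProduct c (l, m))
        = TensorProduct.map ((b.coord i).smulRight (b l)) ((c.coord j).smulRight (c m)) := by
    simpa using b.tensorProduct_coord_comp_map_smulRight c LinearMap.id LinearMap.id i l j m
  rw [comatrixComul_eq_comatrixComulOfBasis b, comatrixComul_eq_comatrixComulOfBasis c,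
    comatrixComul_eq_comatrixComulOfBasis (b.tensorProduct c)]
  refine TensorProduct.ext' fun S T => ?_
  simp only [LinearMap.comp_apply,
    TensorProduct.map_tmul, homTensorHomMap_apply, LinearEquiv.coe_coe,
    comatrixComulOfBasis_apply, Fintype.sum_prod_type]
  simp only [TensorProduct.sum_tmul]
  simp only [TensorProduct.tmul_sum, map_sum, tensorTensorTensorComm_tmul, TensorProduct.map_tmul,
    homTensorHomMap_apply, b.tensorProduct_coord_comp_map_smulRight, coord_smulRight]
  exact Finset.sum_congr rfl fun i _ => Finset.sum_comm

lemma comatrixComul_id_of_finrank_eq_one [Module.Finite k M] (h : finrank k M = 1) :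
    comatrixComul k M LinearMap.id = LinearMap.id ⊗ₜ[k] LinearMap.id := by
  let b := basisUnique Unit h
  have coord_smulRight : (b.coord ()).smulRight (b ()) = LinearMap.id := by
    ext x
    simpa using b.sum_repr x
  rw [comatrixComul_eq_comatrixComulOfBasis b, comatrixComulOfBasis_apply]
  simp only [Fintype.sum_unique, LinearMap.comp_id, coord_smulRight]

variable {U : Type*} [AddCommGroup U] [Module k U]

lemma comul_comp_comp_conjL [Module.Finite k M] [Module.Finite k N] {Δ : U →ₗ[k] U ⊗[k] U}
    {j : (N →ₗ[k] N) →ₗ[k] U} (hj : Δ ∘ₗ j = TensorProduct.map j j ∘ₗ comatrixComul k N)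
    {P : M →ₗ[k] N} {Q : N →ₗ[k] M} (hPQ : P ∘ₗ Q = LinearMap.id) (hQP : Q ∘ₗ P = LinearMap.id) :
    Δ ∘ₗ (j ∘ₗ conjL k P Q)
      = TensorProduct.map (j ∘ₗ conjL k P Q) (j ∘ₗ conjL k P Q) ∘ₗ comatrixComul k M := by
  rw [← LinearMap.comp_assoc, hj, LinearMap.comp_assoc, comatrixComul_comp_conjL P Q hPQ hQP,
    ← LinearMap.comp_assoc, ← TensorProduct.map_comp]

lemma counit_comp_comp_conjL [Module.Finite k M] [Module.Finite k N] {ε : U →ₗ[k] k}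
    {j : (N →ₗ[k] N) →ₗ[k] U} (hj : ε ∘ₗ j = LinearMap.trace k N)
    {P : M →ₗ[k] N} {Q : N →ₗ[k] M} (hQP : Q ∘ₗ P = LinearMap.id) :
    ε ∘ₗ (j ∘ₗ conjL k P Q) = LinearMap.trace k M := by
  ext S : 1
  change (ε ∘ₗ j) (P ∘ₗ (S ∘ₗ Q)) = _
  rw [hj, ← LinearMap.trace_comp_comm', LinearMap.comp_assoc, hQP, LinearMap.comp_id]

end Comatrix

section Coend

variable {k} {𝒞 : Type*} [SmallCategory 𝒞] {G : 𝒞 ⥤ ModuleCat k} {U : Type} [AddCommGroup U]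
  [Module k U] {i : ∀ X : 𝒞, (G.obj X →ₗ[k] G.obj X) →ₗ[k] U}

lemma IsCoendRealization.hom_ext (hreal : IsCoendRealization.{0, 0} k 𝒞 G U i) {W : Type}
    [AddCommGroup W] [Module k W] {φ ψ : U →ₗ[k] W} (h : ∀ X, φ ∘ₗ i X = ψ ∘ₗ i X) : φ = ψ := by
  have dinat : DinatC k 𝒞 G W fun X => φ ∘ₗ i X := fun X Y f S =>
    congrArg φ (hreal.1 X Y f S)
  obtain ⟨θ, -, huniq⟩ := hreal.2 W _ dinat
  exact (huniq φ fun _ => rfl).trans (huniq ψ fun X => (h X).symm).symm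

lemma IsCoendRealization.hom_ext₂ (hreal : IsCoendRealization.{0, 0} k 𝒞 G U i) {W : Type}
    [AddCommGroup W] [Module k W] {A B : U ⊗[k] U →ₗ[k] W}
    (h : ∀ X Y, A ∘ₗ TensorProduct.map (i X) (i Y) = B ∘ₗ TensorProduct.map (i X) (i Y)) :
    A = B :=
  TensorProduct.ext <| hreal.hom_ext fun X => LinearMap.ext fun S => hreal.hom_ext fun Y =>
    LinearMap.ext fun T => LinearMap.congr_fun (h X Y) (S ⊗ₜ T)

variable [∀ X, Module.Finite k (G.obj X)]

lemma IsCoendRealization.comul_comp_mul (hreal : IsCoendRealization.{0, 0} k 𝒞 G U i)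
    {Δ : U →ₗ[k] U ⊗[k] U}
    (hΔ : ∀ X, Δ ∘ₗ i X = TensorProduct.map (i X) (i X) ∘ₗ comatrixComul k (G.obj X))
    {m : U ⊗[k] U →ₗ[k] U}
    (j : ∀ X Y : 𝒞, (G.obj X ⊗[k] G.obj Y →ₗ[k] G.obj X ⊗[k] G.obj Y) →ₗ[k] U)
    (hj : ∀ X Y,
      Δ ∘ₗ j X Y = TensorProduct.map (j X Y) (j X Y) ∘ₗ comatrixComul k (G.obj X ⊗[k] G.obj Y))
    (hm : ∀ X Y, m ∘ₗ TensorProduct.map (i X) (i Y)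
      = j X Y ∘ₗ homTensorHomMap (RingHom.id k) (G.obj X) (G.obj Y) (G.obj X) (G.obj Y)) :
    Δ ∘ₗ m = TensorProduct.map m m ∘ₗ (tensorTensorTensorComm k U U U U).toLinearMap ∘ₗ
      TensorProduct.map Δ Δ := by
  refine hreal.hom_ext₂ fun X Y => ?_
  let φ := homTensorHomMap (RingHom.id k) (G.obj X) (G.obj Y) (G.obj X) (G.obj Y)
  let τ := (tensorTensorTensorComm k (G.obj X →ₗ[k] G.obj X) (G.obj X →ₗ[k] G.obj X)
    (G.obj Y →ₗ[k] G.obj Y) (G.obj Y →ₗ[k] G.obj Y)).toLinearMap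
  let ΔXY := TensorProduct.map (comatrixComul k (G.obj X)) (comatrixComul k (G.obj Y))
  calc (Δ ∘ₗ m) ∘ₗ TensorProduct.map (i X) (i Y)
      = TensorProduct.map (j X Y) (j X Y) ∘ₗ (comatrixComul k _ ∘ₗ φ) := by
        rw [LinearMap.comp_assoc, hm, ← LinearMap.comp_assoc, hj, LinearMap.comp_assoc]
    _ = TensorProduct.map (m ∘ₗ TensorProduct.map (i X) (i Y)) (m ∘ₗ TensorProduct.map (i X) (i Y))
          ∘ₗ τ ∘ₗ ΔXY := by
        rw [comatrixComul_comp_homTensorHomMap, hm, TensorProduct.map_comp, LinearMap.comp_assoc]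
    _ = TensorProduct.map m m ∘ₗ (tensorTensorTensorComm k U U U U).toLinearMap ∘ₗ
          TensorProduct.map (TensorProduct.map (i X) (i X)) (TensorProduct.map (i Y) (i Y)) ∘ₗ
            ΔXY := by
        rw [TensorProduct.map_comp, LinearMap.comp_assoc]
        congr 1
        rw [← LinearMap.comp_assoc, ← LinearMap.comp_assoc, tensorTensorTensorComm_comp_map]
    _ = _ := by
        rw [← TensorProduct.map_comp, ← hΔ, ← hΔ, TensorProduct.map_comp]
        simp only [LinearMap.comp_assoc]

lemma IsCoendRealization.counit_comp_mul (hreal : IsCoendRealization.{0, 0} k 𝒞 G U i)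
    {ε : U →ₗ[k] k} (hε : ∀ X, ε ∘ₗ i X = LinearMap.trace k (G.obj X))
    {m : U ⊗[k] U →ₗ[k] U}
    (j : ∀ X Y : 𝒞, (G.obj X ⊗[k] G.obj Y →ₗ[k] G.obj X ⊗[k] G.obj Y) →ₗ[k] U)
    (hj : ∀ X Y, ε ∘ₗ j X Y = LinearMap.trace k (G.obj X ⊗[k] G.obj Y))
    (hm : ∀ X Y, m ∘ₗ TensorProduct.map (i X) (i Y)
      = j X Y ∘ₗ homTensorHomMap (RingHom.id k) (G.obj X) (G.obj Y) (G.obj X) (G.obj Y)) :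
    ε ∘ₗ m = (TensorProduct.lid k k).toLinearMap ∘ₗ TensorProduct.map ε ε := by
  refine hreal.hom_ext₂ fun X Y => TensorProduct.ext' fun S T => ?_
  calc ε (m (i X S ⊗ₜ i Y T))
      = (ε ∘ₗ j X Y) (TensorProduct.map S T) := congrArg ε (LinearMap.congr_fun (hm X Y) (S ⊗ₜ T))
    _ = (ε ∘ₗ i X) S * (ε ∘ₗ i Y) T := by rw [hj, hε, hε, LinearMap.trace_tensorProduct']
    _ = _ := by simp

end Coend

theorem coend_multiplication_is_coalgebra_map
    (hfd : ∀ X : C, FiniteDimensional k (F.obj X))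
    (U : Type) [AddCommGroup U] [Module k U]
    (i : ∀ X : C, (F.obj X →ₗ[k] F.obj X) →ₗ[k] U)
    (hreal : IsCoendRealization.{0, 0} k C F U i)
    (Δ : U →ₗ[k] U ⊗[k] U) (ε : U →ₗ[k] k)
    (hΔ : ∀ X : C, haveI := hfd X;
      Δ ∘ₗ i X = (TensorProduct.map (i X) (i X)) ∘ₗ comatrixComul k (F.obj X))
    (hε : ∀ X : C, ε ∘ₗ i X = LinearMap.trace k (F.obj X))
    -- the multiplication m and unit η of B = Coend(F):
    (m : U ⊗[k] U →ₗ[k] U)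
    (hm : ∀ (X Y : C) (S : F.obj X →ₗ[k] F.obj X) (T : F.obj Y →ₗ[k] F.obj Y),
      m (i X S ⊗ₜ[k] i Y T)
        = i (X ⊗ Y) (((μ F X Y).hom : (F.obj X ⊗[k] F.obj Y) →ₗ[k] F.obj (X ⊗ Y)) ∘ₗ
            (TensorProduct.map S T) ∘ₗ
            ((δ F X Y).hom : F.obj (X ⊗ Y) →ₗ[k] (F.obj X ⊗[k] F.obj Y)))) :
    -- each m_{X,Y} = i_{X⊗Y} ∘ conj(F₂) is a coalgebra map:
    (∀ X Y : C,
      Δ ∘ₗ (i (X ⊗ Y) ∘ₗ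
          conjL k ((μ F X Y).hom : (F.obj X ⊗[k] F.obj Y) →ₗ[k] F.obj (X ⊗ Y))
            ((δ F X Y).hom : F.obj (X ⊗ Y) →ₗ[k] (F.obj X ⊗[k] F.obj Y)))
        = (TensorProduct.map
            (i (X ⊗ Y) ∘ₗ conjL k ((μ F X Y).hom : (F.obj X ⊗[k] F.obj Y) →ₗ[k] F.obj (X ⊗ Y))
              ((δ F X Y).hom : F.obj (X ⊗ Y) →ₗ[k] (F.obj X ⊗[k] F.obj Y)))
            (i (X ⊗ Y) ∘ₗ conjL k ((μ F X Y).hom : (F.obj X ⊗[k] F.obj Y) →ₗ[k] F.obj (X ⊗ Y))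
              ((δ F X Y).hom : F.obj (X ⊗ Y) →ₗ[k] (F.obj X ⊗[k] F.obj Y)))) ∘ₗ
            comatrixComul k (F.obj X ⊗[k] F.obj Y)) ∧
    (∀ X Y : C,
      ε ∘ₗ (i (X ⊗ Y) ∘ₗ
          conjL k ((μ F X Y).hom : (F.obj X ⊗[k] F.obj Y) →ₗ[k] F.obj (X ⊗ Y))
            ((δ F X Y).hom : F.obj (X ⊗ Y) →ₗ[k] (F.obj X ⊗[k] F.obj Y)))
        = LinearMap.trace k (F.obj X ⊗[k] F.obj Y)) ∧
    -- consequently m and η are coalgebra morphisms: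
    (Δ ∘ₗ m = (TensorProduct.map m m) ∘ₗ
        (tensorTensorTensorComm k U U U U).toLinearMap ∘ₗ (TensorProduct.map Δ Δ)) ∧
    (ε ∘ₗ m = (TensorProduct.lid k k).toLinearMap ∘ₗ TensorProduct.map ε ε) ∧
    (Δ (i (𝟙_ C) LinearMap.id)
      = i (𝟙_ C) LinearMap.id ⊗ₜ[k] i (𝟙_ C) LinearMap.id) ∧
    (ε (i (𝟙_ C) LinearMap.id) = 1) := by
  have hPQ (X Y : C) : (μ F X Y).hom ∘ₗ (δ F X Y).hom = LinearMap.id :=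
    congrArg ModuleCat.Hom.hom (Functor.Monoidal.δ_μ F X Y)
  have hQP (X Y : C) : (δ F X Y).hom ∘ₗ (μ F X Y).hom = LinearMap.id :=
    congrArg ModuleCat.Hom.hom (Functor.Monoidal.μ_δ F X Y)
  have mul_comp_map_generators (X Y : C) : m ∘ₗ TensorProduct.map (i X) (i Y)
      = (i (X ⊗ Y) ∘ₗ conjL k (μ F X Y).hom (δ F X Y).hom) ∘ₗ
        homTensorHomMap (RingHom.id k) (F.obj X) (F.obj Y) (F.obj X) (F.obj Y) :=
    TensorProduct.ext' (hm X Y)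
  have comul_mulXY (X Y : C) :=
    comul_comp_comp_conjL (M := F.obj X ⊗[k] F.obj Y) (hΔ (X ⊗ Y)) (hPQ X Y) (hQP X Y)
  have counit_mulXY (X Y : C) :=
    counit_comp_comp_conjL (M := F.obj X ⊗[k] F.obj Y) (hε (X ⊗ Y)) (hQP X Y)
  have finrank_unit : finrank k (F.obj (𝟙_ C)) = 1 :=
    (Functor.Monoidal.εIso F).toLinearEquiv.finrank_eq.symm.trans (finrank_self k)
  refine ⟨comul_mulXY, counit_mulXY, hreal.comul_comp_mul hΔ _ comul_mulXY mul_comp_map_generators,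
    hreal.counit_comp_mul hε _ counit_mulXY mul_comp_map_generators, ?_, ?_⟩
  · rw [← LinearMap.comp_apply Δ, hΔ, LinearMap.comp_apply,
      comatrixComul_id_of_finrank_eq_one finrank_unit, TensorProduct.map_tmul]
  · rw [← LinearMap.comp_apply ε, hε, LinearMap.trace_id, finrank_unit, Nat.cast_one]
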